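/- Suppose f and h both satisfy (G1) with constant K. Fix L, M and parameters Θ = (θ_{l,j}, w_{l,j})_{0≤l≤L−1, 1≤j≤M} with (1/(ML))∑_{l=0}^{L−1}∑_{j=1}^{M}(‖θ_{l,j}‖² + ‖w_{l,j}‖²) ≤ A². Then the discrete Transformer satisfies ‖T̂_Θ(H,t)‖_{2,col} ≤ ‖H‖_{2,col}·exp(K(1+A+A²)) at every grid point t ∈ {0, Δt/2, Δt, 3Δt/2, …, 1−Δt/2, 1}, where Δt = 1/L. -/

import Mathlib

/-!
Each half-step `T ↦ T + c • ∑ⱼ g T pⱼ` multiplies `‖·‖_{2,col}` by at most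
`1 + c K ∑ⱼ (1 + ‖pⱼ‖ + ‖pⱼ‖²) ≤ exp (c K ∑ⱼ (1 + ‖pⱼ‖ + ‖pⱼ‖²))`, by (G1) and the triangle
inequality. Multiplying over all half-steps, the exponent is at most `K` times the mean of
`1 + ‖·‖ + ‖·‖²` over all parameters, and by Cauchy–Schwarz the mean of the norms is at most the
root mean square `A`.
-/

open MeasureTheory Set

noncomputable section

/-- `D × (N+1)` real matrices, with the Frobenius (Euclidean) norm. -/
abbrev Mat (D N : ℕ) : Type := EuclideanSpace ℝ (Fin D × Fin (N + 1))

/-- Parameter space `ℝ^p` with the Euclidean norm. -/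
abbrev Par (p : ℕ) : Type := EuclideanSpace ℝ (Fin p)

/-- The `j`-th column of a matrix, as a Euclidean vector. -/
noncomputable def matCol {D N : ℕ} (Z : Mat D N) (j : Fin (N + 1)) :
    EuclideanSpace ℝ (Fin D) :=
  (WithLp.equiv 2 (Fin D → ℝ)).symm fun i => Z (i, j)

/-- Maximum ℓ²-norm of a column: `‖Z‖_{2,col}`. -/
noncomputable def colNorm {D N : ℕ} (Z : Mat D N) : ℝ :=
  ⨆ j : Fin (N + 1), ‖matCol Z j‖

/-- The discrete Transformer: `T̂(t_{l+1})` is obtained from `T̂(t_l)` by one self-attention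
half-step with encoder `f` followed by one feed-forward half-step with encoder `h`,
with step size `Δt/2 = 1/(2L)` and `M` heads. -/
noncomputable def Tdis {D N q : ℕ} (f h : Mat D N → Par q → Mat D N) (L M : ℕ)
    (θ w : ℕ → Fin M → Par q) (H : Mat D N) : ℕ → Mat D N
  | 0 => H
  | l + 1 =>
    let T := Tdis f h L M θ w H l
    let T' := T + (2 * (L : ℝ) * (M : ℝ))⁻¹ • ∑ j : Fin M, f T (θ l j)
    T' + (2 * (L : ℝ) * (M : ℝ))⁻¹ • ∑ j : Fin M, h T' (w l j)

/-- The discrete Transformer at the half grid point `t_l + Δt/2`. -/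
noncomputable def TdisHalf {D N q : ℕ} (f h : Mat D N → Par q → Mat D N) (L M : ℕ)
    (θ w : ℕ → Fin M → Par q) (H : Mat D N) (l : ℕ) : Mat D N :=
  Tdis f h L M θ w H l +
    (2 * (L : ℝ) * (M : ℝ))⁻¹ • ∑ j : Fin M, f (Tdis f h L M θ w H l) (θ l j)

open Finset

variable {D N q : ℕ}

lemma norm_matCol_le_colNorm (Z : Mat D N) (j : Fin (N + 1)) : ‖matCol Z j‖ ≤ colNorm Z :=
  le_ciSup (f := fun j => ‖matCol Z j‖) (Set.finite_range _).bddAbove j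

lemma colNorm_nonneg (Z : Mat D N) : 0 ≤ colNorm Z :=
  (norm_nonneg _).trans (norm_matCol_le_colNorm Z 0)

lemma colNorm_le {Z : Mat D N} {C : ℝ} (h : ∀ j, ‖matCol Z j‖ ≤ C) : colNorm Z ≤ C :=
  ciSup_le h

lemma colNorm_add_le (X Y : Mat D N) : colNorm (X + Y) ≤ colNorm X + colNorm Y :=
  colNorm_le fun j => (norm_add_le (matCol X j) (matCol Y j)).trans
    (add_le_add (norm_matCol_le_colNorm X j) (norm_matCol_le_colNorm Y j))

lemma colNorm_smul_le {a : ℝ} (ha : 0 ≤ a) (X : Mat D N) : colNorm (a • X) ≤ a * colNorm X :=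
  colNorm_le fun j => by
    change ‖a • matCol X j‖ ≤ _
    rw [norm_smul, Real.norm_of_nonneg ha]
    exact mul_le_mul_of_nonneg_left (norm_matCol_le_colNorm X j) ha

lemma colNorm_sum_le {ι : Type*} (s : Finset ι) (F : ι → Mat D N) :
    colNorm (∑ i ∈ s, F i) ≤ ∑ i ∈ s, colNorm (F i) :=
  le_sum_of_subadditive colNorm (colNorm_le fun _ => by simp [matCol]; rfl) colNorm_add_le s F

lemma sum_le_card_mul_of_sum_sq_le {ι : Type*} {s : Finset ι} {u : ι → ℝ} {A : ℝ} (hA : 0 ≤ A)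
    (h : ∑ i ∈ s, u i ^ 2 ≤ #s * A ^ 2) : ∑ i ∈ s, u i ≤ #s * A := by
  refine le_of_sq_le_sq ?_ (by positivity)
  calc (∑ i ∈ s, u i) ^ 2 ≤ #s * ∑ i ∈ s, u i ^ 2 := sq_sum_le_card_mul_sum_sq
    _ ≤ #s * (#s * A ^ 2) := by gcongr
    _ = (#s * A) ^ 2 := by ring

lemma sum_quadratic_le_of_sum_sq_le {ι : Type*} {s : Finset ι} (x y : ι → ℝ) {A : ℝ}
    (hA : 0 ≤ A) (h : ∑ i ∈ s, (x i ^ 2 + y i ^ 2) ≤ #s * A ^ 2) :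
    ∑ i ∈ s, ((1 + x i + x i ^ 2) + (1 + y i + y i ^ 2)) ≤ 2 * #s * (1 + A + A ^ 2) := by
  have hmean : ∑ i ∈ s, (x i + y i) / 2 ≤ #s * A :=
    sum_le_card_mul_of_sum_sq_le hA <| (sum_le_sum fun i _ => by
      nlinarith [sq_nonneg (x i - y i), sq_nonneg (x i), sq_nonneg (y i)]).trans h
  have hsplit : ∀ i, (1 + x i + x i ^ 2) + (1 + y i + y i ^ 2)
      = 2 + 2 * ((x i + y i) / 2) + (x i ^ 2 + y i ^ 2) := fun i => by ring
  rw [sum_congr rfl fun i _ => hsplit i, sum_add_distrib, sum_add_distrib, sum_const,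
    ← mul_sum, nsmul_eq_mul]
  nlinarith [sq_nonneg A, Nat.cast_nonneg (α := ℝ) #s]

def layerCost {M : ℕ} (p : Fin M → Par q) : ℝ :=
  ∑ j, (1 + ‖p j‖ + ‖p j‖ ^ 2)

lemma layerCost_nonneg {M : ℕ} (p : Fin M → Par q) : 0 ≤ layerCost p :=
  sum_nonneg fun _ _ => by positivity

lemma colNorm_add_smul_sum_le {M : ℕ} (g : Mat D N → Par q → Mat D N) {K c : ℝ} (hc : 0 ≤ c)
    (hg : ∀ T p, colNorm (g T p) ≤ K * colNorm T * (1 + ‖p‖ + ‖p‖ ^ 2))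
    (T : Mat D N) (p : Fin M → Par q) :
    colNorm (T + c • ∑ j, g T (p j)) ≤ colNorm T * Real.exp (c * K * layerCost p) := by
  have hsum : ∑ j, colNorm (g T (p j)) ≤ K * colNorm T * layerCost p := by
    rw [layerCost, mul_sum]
    exact sum_le_sum fun j _ => hg T (p j)
  calc colNorm (T + c • ∑ j, g T (p j))
      ≤ colNorm T + c * ∑ j, colNorm (g T (p j)) :=
        (colNorm_add_le _ _).trans <| add_le_add_right
          ((colNorm_smul_le hc _).trans (mul_le_mul_of_nonneg_left (colNorm_sum_le _ _) hc)) _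
    _ ≤ colNorm T + c * (K * colNorm T * layerCost p) := by gcongr
    _ = colNorm T * (c * K * layerCost p + 1) := by ring
    _ ≤ colNorm T * Real.exp (c * K * layerCost p) :=
        mul_le_mul_of_nonneg_left (Real.add_one_le_exp _) (colNorm_nonneg T)

lemma le_mul_exp_sum_of_le_mul_exp {u e : ℕ → ℝ} (h : ∀ l, u (l + 1) ≤ u l * Real.exp (e l))
    (l : ℕ) : u l ≤ u 0 * Real.exp (∑ i ∈ Finset.range l, e i) := by
  induction l with
  | zero => simp
  | succ l ih =>
    calc u (l + 1) ≤ u l * Real.exp (e l) := h l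
      _ ≤ u 0 * Real.exp (∑ i ∈ Finset.range l, e i) * Real.exp (e l) := by gcongr
      _ = u 0 * Real.exp (∑ i ∈ Finset.range (l + 1), e i) := by
        rw [sum_range_succ, Real.exp_add, mul_assoc]

lemma sum_layerCost_le {L M : ℕ} (θ w : ℕ → Fin M → Par q) {A : ℝ} (hA : 0 ≤ A)
    (h : ∑ l ∈ Finset.range L, ∑ j, (‖θ l j‖ ^ 2 + ‖w l j‖ ^ 2) ≤ L * M * A ^ 2) :
    ∑ l ∈ Finset.range L, (layerCost (θ l) + layerCost (w l)) ≤ 2 * L * M * (1 + A + A ^ 2) := by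
  have := sum_quadratic_le_of_sum_sq_le (s := Finset.range L ×ˢ Finset.univ)
    (fun i => ‖θ i.1 i.2‖) (fun i => ‖w i.1 i.2‖) hA
    (by simpa [sum_product, card_product, mul_assoc] using h)
  simpa [layerCost, sum_product, card_product, sum_add_distrib, mul_assoc] using this

section Transformer

variable (f h : Mat D N → Par q → Mat D N) {K : ℝ}
  (hf : ∀ T θ, colNorm (f T θ) ≤ K * colNorm T * (1 + ‖θ‖ + ‖θ‖ ^ 2))
  (hh : ∀ T w, colNorm (h T w) ≤ K * colNorm T * (1 + ‖w‖ + ‖w‖ ^ 2))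
  (L M : ℕ) (θ w : ℕ → Fin M → Par q) (H : Mat D N)

include hf in
lemma colNorm_TdisHalf_le (l : ℕ) :
    colNorm (TdisHalf f h L M θ w H l) ≤
      colNorm (Tdis f h L M θ w H l) * Real.exp ((2 * L * M : ℝ)⁻¹ * K * layerCost (θ l)) :=
  colNorm_add_smul_sum_le f (by positivity) hf _ (θ l)

include hh in
lemma colNorm_Tdis_succ_le (l : ℕ) :
    colNorm (Tdis f h L M θ w H (l + 1)) ≤
      colNorm (TdisHalf f h L M θ w H l) * Real.exp ((2 * L * M : ℝ)⁻¹ * K * layerCost (w l)) :=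
  colNorm_add_smul_sum_le h (by positivity) hh _ (w l)

include hf hh in
lemma colNorm_Tdis_le (l : ℕ) :
    colNorm (Tdis f h L M θ w H l) ≤ colNorm H * Real.exp ((2 * L * M : ℝ)⁻¹ * K *
      ∑ i ∈ Finset.range l, (layerCost (θ i) + layerCost (w i))) := by
  rw [mul_sum]
  refine le_mul_exp_sum_of_le_mul_exp (u := fun i => colNorm (Tdis f h L M θ w H i))
    (fun i => ?_) l
  calc colNorm (Tdis f h L M θ w H (i + 1))
      ≤ colNorm (Tdis f h L M θ w H i) * Real.exp ((2 * L * M : ℝ)⁻¹ * K * layerCost (θ i))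
        * Real.exp ((2 * L * M : ℝ)⁻¹ * K * layerCost (w i)) :=
      (colNorm_Tdis_succ_le f h hh L M θ w H i).trans
        (by gcongr; exact colNorm_TdisHalf_le f h hf L M θ w H i)
    _ = _ := by rw [mul_assoc, ← Real.exp_add, mul_add]

include hf hh in
lemma colNorm_TdisHalf_le_exp_sum (hK : 0 ≤ K) (l : ℕ) :
    colNorm (TdisHalf f h L M θ w H l) ≤ colNorm H * Real.exp ((2 * L * M : ℝ)⁻¹ * K *
      ∑ i ∈ Finset.range (l + 1), (layerCost (θ i) + layerCost (w i))) := by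
  set c : ℝ := (2 * L * M : ℝ)⁻¹
  calc colNorm (TdisHalf f h L M θ w H l)
      ≤ colNorm H * Real.exp (c * K * ∑ i ∈ Finset.range l, (layerCost (θ i) + layerCost (w i)))
        * Real.exp (c * K * layerCost (θ l)) :=
      (colNorm_TdisHalf_le f h hf L M θ w H l).trans
        (by gcongr; exact colNorm_Tdis_le f h hf hh L M θ w H l)
    _ = colNorm H * Real.exp (c * K *
          (∑ i ∈ Finset.range l, (layerCost (θ i) + layerCost (w i)) + layerCost (θ l))) := by
      rw [mul_assoc, ← Real.exp_add, mul_add]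
    _ ≤ _ := by
      rw [sum_range_succ]
      gcongr
      · exact colNorm_nonneg H
      · exact le_add_of_nonneg_right (layerCost_nonneg (w l))

end Transformer

/-- column-norm bound for the discrete Transformer at all (full and half)
grid points. -/
theorem stmt6 (D N q : ℕ) (f h : Mat D N → Par q → Mat D N) (K A : ℝ)
    (hK : 0 < K) (hA : 0 ≤ A)
    (hG1f : ∀ (T : Mat D N) (θ : Par q),
      colNorm (f T θ) ≤ K * colNorm T * (1 + ‖θ‖ + ‖θ‖ ^ 2))
    (hG1h : ∀ (T : Mat D N) (w : Par q),
      colNorm (h T w) ≤ K * colNorm T * (1 + ‖w‖ + ‖w‖ ^ 2))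
    (L M : ℕ) (hL : 0 < L) (hM : 0 < M)
    (θ w : ℕ → Fin M → Par q)
    (hparam : (1 / ((M : ℝ) * L)) *
        ∑ l ∈ Finset.range L, ∑ j : Fin M, (‖θ l j‖ ^ 2 + ‖w l j‖ ^ 2) ≤ A ^ 2)
    (H : Mat D N) :
    (∀ l ≤ L, colNorm (Tdis f h L M θ w H l) ≤
        colNorm H * Real.exp (K * (1 + A + A ^ 2))) ∧
    (∀ l < L, colNorm (TdisHalf f h L M θ w H l) ≤
        colNorm H * Real.exp (K * (1 + A + A ^ 2))) := by
  have htotal : (2 * L * M : ℝ)⁻¹ * ∑ l ∈ Finset.range L, (layerCost (θ l) + layerCost (w l))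
      ≤ 1 + A + A ^ 2 := by
    rw [inv_mul_le_iff₀ (by positivity)]
    refine sum_layerCost_le θ w hA ?_
    rw [one_div, inv_mul_le_iff₀ (by positivity)] at hparam
    linarith
  have hexp : ∀ l ≤ L, colNorm H * Real.exp ((2 * L * M : ℝ)⁻¹ * K *
      ∑ i ∈ Finset.range l, (layerCost (θ i) + layerCost (w i))) ≤
      colNorm H * Real.exp (K * (1 + A + A ^ 2)) := by
    intro l hl
    refine mul_le_mul_of_nonneg_left (Real.exp_le_exp.2 ?_) (colNorm_nonneg H)
    rw [mul_comm _ K, mul_assoc]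
    calc K * ((2 * L * M : ℝ)⁻¹ * ∑ i ∈ Finset.range l, (layerCost (θ i) + layerCost (w i)))
        ≤ K * ((2 * L * M : ℝ)⁻¹ * ∑ i ∈ Finset.range L, (layerCost (θ i) + layerCost (w i))) := by
          gcongr
          exact fun i _ _ => add_nonneg (layerCost_nonneg _) (layerCost_nonneg _)
      _ ≤ K * (1 + A + A ^ 2) := by gcongr
  exact ⟨fun l hl => (colNorm_Tdis_le f h hG1f hG1h L M θ w H l).trans (hexp l hl),
    fun l hl => (colNorm_TdisHalf_le_exp_sum f h hG1f hG1h L M θ w H hK.le l).trans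
      (hexp (l + 1) hl)⟩
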